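/- arXiv:math/0205239 — 8 statements merged into one kernel-verified Lean document; each statement's English description precedes it below -/
import Mathlib

section
/- Let φ : A → B be a ring homomorphism such that the induced morphism Spec(B) → Spec(A) is an open immersion. Then every ideal J of B equals the extension (φ⁻¹(J))·B of its contraction to A. -/
/-!
An open immersion `Spec B → Spec A` is flat, and it is a monomorphism of schemes, so `A → B` is an
epimorphism of rings. For a flat epimorphism `A → B`, an ideal `J` of `B` with contraction `I` gives
an injection `A/I → B/J`; tensoring with the flat `A`-module `B` keeps it injective, and since
`B ⊗_A B/J ≅ B/J` for an epimorphism, the result is the quotient map `B/IB → B/J`. Hence `J = IB`.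
-/

open AlgebraicGeometry CategoryTheory TensorProduct

theorem Ideal.map_comap_of_isEpi_of_flat {R A : Type*} [CommRing R] [CommRing A] [Algebra R A]
    [Algebra.IsEpi R A] [Module.Flat R A] (J : Ideal A) :
    (J.comap (algebraMap R A)).map (algebraMap R A) = J := by
  set I := J.comap (algebraMap R A)
  refine le_antisymm Ideal.map_comap_le fun x hx ↦ ?_
  let ι : (R ⧸ I) →ₗ[R] (A ⧸ J) := (Ideal.quotientMapₐ J (Algebra.ofId R A) le_rfl).toLinearMap
  have hι : Function.Injective (ι.lTensor A) :=
    Module.Flat.lTensor_preserves_injective_linearMap ι Ideal.quotientMap_injective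
  have hι1 : ι 1 = 1 := map_one (Ideal.quotientMapₐ J (Algebra.ofId R A) le_rfl)
  have hx_tmul : x ⊗ₜ[R] (1 : R ⧸ I) = 0 := by
    apply hι
    apply (TensorProduct.lid' R A (A ⧸ J)).injective
    rw [LinearMap.lTensor_tmul, map_zero, map_zero, lid'_apply_tmul, hι1, Algebra.smul_def,
      mul_one, Ideal.Quotient.algebraMap_eq, Ideal.Quotient.eq_zero_iff_mem]
    exact hx
  rwa [← Ideal.Quotient.eq_zero_iff_mem,
    ← (Algebra.TensorProduct.quotIdealMapEquivTensorQuot A I).map_eq_zero_iff]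

theorem AlgebraicGeometry.epi_of_isOpenImmersion_SpecMap {R S : CommRingCat} (f : R ⟶ S)
    [IsOpenImmersion (Spec.map f)] : Epi f := by
  have : Mono (Scheme.Spec.map f.op) := IsOpenImmersion.mono (Spec.map f)
  have : Mono f.op := Scheme.Spec.mono_of_mono_map this
  exact unop_epi_of_mono f.op

/-- If `φ : A → B` induces an open immersion `Spec B → Spec A`, then every ideal `J` of `B`
equals the extension of its contraction to `A`. -/
theorem stmt_0 {A B : Type} [CommRing A] [CommRing B] (φ : A →+* B)
    (h : IsOpenImmersion (Spec.map (CommRingCat.ofHom φ))) :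
    ∀ J : Ideal B, J = Ideal.map φ (Ideal.comap φ J) := by
  intro J
  let := φ.toAlgebra
  have : Module.Flat A B :=
    (HasRingHomProperty.Spec_iff (P := @Flat) (φ := CommRingCat.ofHom φ)).mp inferInstance
  have : Algebra.IsEpi A B :=
    CommRingCat.epi_iff_epi.mp (epi_of_isOpenImmersion_SpecMap (CommRingCat.ofHom φ))
  exact (Ideal.map_comap_of_isEpi_of_flat J).symm
end

section
/- Let φ : A → B be a ring homomorphism such that Spec(B) → Spec(A) is an open immersion. Then there exist finitely many elements f₁,…,f_r of A such that the localization maps A_{f_i} → B_{φ(f_i)} are isomorphisms and the φ(f_i) generate the unit ideal in B. -/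
/-!
Over a basic open `D(r) ⊆ Spec A` contained in the image of the open immersion `Spec B → Spec A`,
the immersion restricts to an isomorphism, and that restriction is `Spec` of
`A_r → B_{φ r}`; so this map is bijective. Such `D(r)` cover the image, hence their preimages
`D(φ r)` cover `Spec B`, i.e. the `φ r` generate the unit ideal, and finitely many suffice.
-/

open AlgebraicGeometry CategoryTheory

lemma Ideal.exists_fin_family_of_span_eq_top {R : Type*} [Semiring R] {s : Set R}
    (hs : Ideal.span s = ⊤) :
    ∃ (n : ℕ) (g : Fin n → R), (∀ i, g i ∈ s) ∧ Ideal.span (Set.range g) = ⊤ := by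
  obtain ⟨t, hts, ht⟩ := (Ideal.span_eq_top_iff_finite s).mp hs
  refine ⟨t.card, fun i ↦ t.equivFin.symm i, fun i ↦ hts (t.equivFin.symm i).2, ?_⟩
  convert ht
  ext x
  exact ⟨by rintro ⟨i, rfl⟩; exact (t.equivFin.symm i).2,
    fun hx ↦ ⟨t.equivFin ⟨x, hx⟩, by simp⟩⟩

namespace AlgebraicGeometry

lemma IsOpenImmersion.isIso_morphismRestrict_of_le_opensRange {X Y : Scheme} (f : X ⟶ Y)
    [IsOpenImmersion f] {U : Y.Opens} (hU : U ≤ f.opensRange) : IsIso (f ∣_ U) := by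
  refine isIso_of_isOpenImmersion_of_opensRange_eq_top _ (top_unique fun y _ ↦ ?_)
  obtain ⟨x, hx⟩ := hU y.2
  exact ⟨⟨x, show f x ∈ U from hx ▸ y.2⟩, Subtype.ext ((morphismRestrict_base_coe f U _).trans hx)⟩

lemma bijective_awayMap_of_basicOpen_le_opensRange {R S : CommRingCat} (φ : R ⟶ S)
    [IsOpenImmersion (Spec.map φ)] {r : R}
    (hr : PrimeSpectrum.basicOpen r ≤ (Spec.map φ).opensRange) :
    Function.Bijective (Localization.awayMap φ.hom r) := by
  have hrestrict := IsOpenImmersion.isIso_morphismRestrict_of_le_opensRange (Spec.map φ)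
    (U := PrimeSpectrum.basicOpen r) hr
  have : IsIso (Spec.map (CommRingCat.ofHom (Localization.awayMap φ.hom r))) :=
    ((MorphismProperty.isomorphisms _).arrow_mk_iso_iff (SpecMapRestrictBasicOpenIso φ r)).mp
      hrestrict
  exact isIso_SpecMap_iff.mp this

lemma span_image_setOf_bijective_awayMap_eq_top {R S : CommRingCat} (φ : R ⟶ S)
    [IsOpenImmersion (Spec.map φ)] :
    Ideal.span (φ.hom '' {r | Function.Bijective (Localization.awayMap φ.hom r)}) = ⊤ := by
  rw [← PrimeSpectrum.zeroLocus_empty_iff_eq_top, PrimeSpectrum.zeroLocus_span,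
    Set.eq_empty_iff_forall_notMem]
  intro q hq
  obtain ⟨_, ⟨r, rfl⟩, hqr, hr⟩ :=
    PrimeSpectrum.isTopologicalBasis_basic_opens.exists_subset_of_mem_open
      (Set.mem_range_self q) (Spec.map φ).isOpenEmbedding.isOpen_range
  exact hqr (hq ⟨r, bijective_awayMap_of_basicOpen_le_opensRange φ hr, rfl⟩)

end AlgebraicGeometry

/-- If `φ : A → B` induces an open immersion `Spec B → Spec A`, then there exist finitely many
`f₁, …, f_r ∈ A` such that each induced map `A_{f i} → B_{φ (f i)}` is an isomorphism and the
`φ (f i)` generate the unit ideal of `B`. -/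
theorem stmt_1 {A B : Type} [CommRing A] [CommRing B] (φ : A →+* B)
    (h : IsOpenImmersion (Spec.map (CommRingCat.ofHom φ))) :
    ∃ (r : ℕ) (f : Fin r → A),
      (∀ i, Function.Bijective
        (IsLocalization.Away.map (Localization.Away (f i))
          (Localization.Away (φ (f i))) φ (f i))) ∧
      Ideal.span (Set.range fun i => φ (f i)) = ⊤ := by
  obtain ⟨r, g, hg, hspan⟩ := Ideal.exists_fin_family_of_span_eq_top
    (span_image_setOf_bijective_awayMap_eq_top (CommRingCat.ofHom φ))
  choose f hf hfg using hg
  refine ⟨r, f, hf, ?_⟩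
  rwa [show (fun i ↦ φ (f i)) = g from funext hfg]
end

section
/- Let (A_i, φ_{ij}) be a directed (filtered) system of commutative rings such that for every pair i ≥ j, every ideal of A_i is the extension of its contraction along φ_{ij} : A_j → A_i. Then for each j, every ideal of the colimit colim_i A_i is the extension of its contraction along the natural map A_j → colim_i A_i. -/
/-- For a directed (filtered) system of commutative rings in which every ideal of a later ring
is the extension of its contraction along the transition maps, every ideal of the colimit is
the extension of its contraction along the canonical map from any component. -/
theorem stmt_2 {ι : Type} [Preorder ι] [IsDirected ι (· ≤ ·)] [Nonempty ι]
    (G : ι → Type) [∀ i, CommRing (G i)]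
    (f : ∀ i j, i ≤ j → G i →+* G j)
    [DirectedSystem G fun i j h => f i j h]
    (hext : ∀ i j (h : i ≤ j) (J : Ideal (G j)),
      J = Ideal.map (f i j h) (Ideal.comap (f i j h) J)) :
    ∀ (j : ι) (J : Ideal (Ring.DirectLimit G fun i j h => f i j h)),
      J = Ideal.map (Ring.DirectLimit.of G (fun i j h => f i j h) j)
            (Ideal.comap (Ring.DirectLimit.of G (fun i j h => f i j h) j) J) := by
  intro j J
  refine le_antisymm ?_ (Ideal.map_le_iff_le_comap.mpr le_rfl)
  intro x hx
  obtain ⟨k, a, rfl⟩ := Ring.DirectLimit.exists_of x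
  obtain ⟨m, hjm, hkm⟩ := directed_of (· ≤ ·) j k
  rw [← Ring.DirectLimit.of_f (f := fun i j h => f i j h) hkm a] at hx ⊢
  set b := f k m hkm a with hb
  have hbJ : b ∈ Ideal.comap (Ring.DirectLimit.of G (fun i j h => f i j h) m) J := hx
  have h1 := hext j m hjm (Ideal.comap (Ring.DirectLimit.of G (fun i j h => f i j h) m) J)
  rw [h1] at hbJ
  have h2 : Ideal.comap (f j m hjm)
      (Ideal.comap (Ring.DirectLimit.of G (fun i j h => f i j h) m) J)
      = Ideal.comap (Ring.DirectLimit.of G (fun i j h => f i j h) j) J := by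
    rw [Ideal.comap_comap]
    congr 1
    ext y
    exact Ring.DirectLimit.of_f hjm y
  rw [h2] at hbJ
  have := Ideal.mem_map_of_mem (Ring.DirectLimit.of G (fun i j h => f i j h) m) hbJ
  rwa [Ideal.map_map, show (Ring.DirectLimit.of G (fun i j h => f i j h) m).comp (f j m hjm)
      = Ring.DirectLimit.of G (fun i j h => f i j h) j from
      RingHom.ext fun y => Ring.DirectLimit.of_f hjm y] at this
end

section
/- Let k be a field and let S ⊆ k[x,y] be the set of nonzero polynomials in the variable x only, and T ⊆ k[x,y] the set of nonzero polynomials in the variable y only. Then, inside the fraction field k(x,y), the intersection of the localizations S⁻¹k[x,y] and T⁻¹k[x,y] equals k[x,y]. -/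
/-!
A polynomial in `x` alone and a polynomial in `y` alone have no common nonconstant factor, since
in a domain the variables of a divisor are among those of the multiple. So if `z s = p` and
`z t = q` with `s ∈ k[x]`, `t ∈ k[y]`, then `s ∣ p t = q s` forces `s ∣ p`, i.e. `z ∈ k[x,y]`.
-/

open MvPolynomial

namespace MvPolynomial

variable {σ R : Type*}

theorem vars_subset_of_dvd [CommSemiring R] [NoZeroDivisors R] [DecidableEq σ]
    {p q : MvPolynomial σ R} (h : p ∣ q) (hq : q ≠ 0) : p.vars ⊆ q.vars := by
  obtain ⟨r, rfl⟩ := h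
  rw [vars_def, vars_def, degrees_mul_eq (left_ne_zero_of_mul hq) (right_ne_zero_of_mul hq),
    Multiset.toFinset_add]
  exact Finset.subset_union_left

theorem vars_subset_singleton_of_mem_adjoin_X [CommSemiring R] {i : σ} {p : MvPolynomial σ R}
    (hp : p ∈ Algebra.adjoin R {X i}) : p.vars ⊆ {i} := by
  rw [← Set.image_singleton, ← supported_eq_adjoin_X, mem_supported] at hp
  exact_mod_cast hp

theorem isRelPrime_of_disjoint_vars {k : Type*} [Field k] {p q : MvPolynomial σ k}
    (hp : p ≠ 0) (hq : q ≠ 0) (h : Disjoint p.vars q.vars) : IsRelPrime p q := by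
  classical
  intro d hdp hdq
  have hd : d.vars = ∅ :=
    Finset.subset_empty.mp (h (vars_subset_of_dvd hdp hp) (vars_subset_of_dvd hdq hq))
  rw [vars_eq_empty_iff_eq_C] at hd
  have hd0 : d.coeff 0 ≠ 0 := fun h0 => hp (zero_dvd_iff.mp (by rwa [hd, h0, C_0] at hdp))
  rw [hd]
  exact (isUnit_iff_ne_zero.mpr hd0).map C

end MvPolynomial

theorem mem_range_algebraMap_of_isRelPrime {R K : Type*} [CommRing R] [DecompositionMonoid R]
    [Field K] [Algebra R K] [IsFractionRing R K] {z : K} {s t p q : R}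
    (hst : IsRelPrime s t) (hs : s ≠ 0) (hzs : z * algebraMap R K s = algebraMap R K p)
    (hzt : z * algebraMap R K t = algebraMap R K q) : z ∈ Set.range (algebraMap R K) := by
  have hinj : Function.Injective (algebraMap R K) := IsFractionRing.injective R K
  have hcross : p * t = q * s := hinj (by rw [map_mul, map_mul, ← hzs, ← hzt]; ring)
  obtain ⟨u, rfl⟩ : s ∣ p := hst.dvd_of_dvd_mul_right ⟨q, by rw [hcross, mul_comm]⟩
  refine ⟨u, mul_right_cancel₀ ((map_ne_zero_iff _ hinj).mpr hs) ?_⟩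
  rw [hzs, map_mul, mul_comm]

/-- Inside `k(x,y)`, the intersection of the localization of `k[x,y]` at the nonzero
polynomials in `x` alone with the localization at the nonzero polynomials in `y` alone
is `k[x,y]` itself. -/
theorem stmt_5 (k : Type) [Field k] :
    letI R := MvPolynomial (Fin 2) k
    letI K := FractionRing R
    letI S : Set R := {p | p ≠ 0 ∧ p ∈ Algebra.adjoin k ({X 0} : Set R)}
    letI T : Set R := {p | p ≠ 0 ∧ p ∈ Algebra.adjoin k ({X 1} : Set R)}
    {z : K | ∃ p s, s ∈ S ∧ z * algebraMap R K s = algebraMap R K p} ∩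
      {z : K | ∃ p t, t ∈ T ∧ z * algebraMap R K t = algebraMap R K p} =
      Set.range (algebraMap R K) := by
  ext z
  constructor
  · rintro ⟨⟨p, s, ⟨hs0, hsx⟩, hzs⟩, ⟨q, t, ⟨ht0, hty⟩, hzt⟩⟩
    have hvars : Disjoint s.vars t.vars :=
      Finset.disjoint_of_subset_left (vars_subset_singleton_of_mem_adjoin_X hsx)
        (Finset.disjoint_of_subset_right (vars_subset_singleton_of_mem_adjoin_X hty) (by decide))
    exact mem_range_algebraMap_of_isRelPrime (isRelPrime_of_disjoint_vars hs0 ht0 hvars) hs0 hzs hzt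
  · rintro ⟨p, rfl⟩
    exact ⟨⟨p, 1, ⟨one_ne_zero, one_mem _⟩, by simp⟩, ⟨p, 1, ⟨one_ne_zero, one_mem _⟩, by simp⟩⟩
end

section
/- Base change of generalized fraction rings: if R is an A-algebra, A → B a ring homomorphism, and U a family of invertible R-modules with sections, then R_U ⊗_A B is canonically isomorphic to (R ⊗_A B)_{U_B}, where U_B is the family obtained from U by base change to R ⊗_A B. -/
open TensorProduct

/-- An `R`-module `M` is invertible if the natural contraction `M ⊗[R] M^* → R` is bijective
(equivalently, `M` is finitely generated projective of rank one). -/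
def IsInvertibleModule (R M : Type) [CommRing R] [AddCommGroup M] [Module R M] : Prop :=
  Function.Bijective (contractRight (R := R) (M := M))

/-- An `R`-algebra `A` inverts a family of sections `s α` of modules `L α` if each map
`A → A ⊗[R] L α`, `x ↦ x ⊗ s α`, is bijective (i.e. each `1 ⊗ s α` is nowhere vanishing). -/
def Inverts (R : Type) [CommRing R] {ι : Type} (L : ι → Type)
    [∀ α, AddCommGroup (L α)] [∀ α, Module R (L α)] (s : ∀ α, L α)
    (A : Type) [CommRing A] [Algebra R A] : Prop :=
  ∀ α, Function.Bijective fun x : A => (x ⊗ₜ[R] s α : A ⊗[R] L α)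

/-- `Q` is a generalized fraction ring of `R` with respect to the family of sections
`s α ∈ L α` of invertible modules: `Q` inverts all the sections `s α`, and it is universal
among `R`-algebras doing so.  This is the universal property of the filtered colimit
`R_U = colim_{a ∈ ℕ·A} L^a` (Theorem 3.2 / Proposition 3.6 of the paper). -/
structure IsGenFractionRing (R : Type) [CommRing R] {ι : Type} (L : ι → Type)
    [∀ α, AddCommGroup (L α)] [∀ α, Module R (L α)] (s : ∀ α, L α)
    (Q : Type) [CommRing Q] [Algebra R Q] : Prop where
  inverts : Inverts R L s Q
  universal : ∀ (A : Type) [CommRing A] [Algebra R A],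
    Inverts R L s A → ∃! _ : Q →ₐ[R] A, True

/-- If `Q` inverts the sections `s α` then so does any `Q`-algebra. -/
theorem inverts_of_algebra (R : Type) [CommRing R]
    {ι : Type} (L : ι → Type) [∀ α, AddCommGroup (L α)] [∀ α, Module R (L α)]
    (s : ∀ α, L α)
    (Q : Type) [CommRing Q] [Algebra R Q]
    (C : Type) [CommRing C] [Algebra R C] [Algebra Q C] [IsScalarTower R Q C]
    (h : Inverts R L s Q) : Inverts R L s C := by
  intro α
  let fl : Q →ₗ[Q] Q ⊗[R] L α :=
    { toFun := fun x => x ⊗ₜ[R] s α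
      map_add' := fun x y => add_tmul x y (s α)
      map_smul' := fun q x => (smul_tmul' q x (s α)).symm }
  let f : Q ≃ₗ[Q] Q ⊗[R] L α := LinearEquiv.ofBijective fl (h α)
  let e := AlgebraTensorModule.cancelBaseChange R Q Q C (L α)
  have key : (fun x : C => (x ⊗ₜ[R] s α : C ⊗[R] L α)) =
      (e : _ → _) ∘ (LinearEquiv.lTensor C f : _ → _) ∘
        ((TensorProduct.rid Q C).symm : _ → _) := by
    funext x
    show x ⊗ₜ[R] s α = e ((LinearEquiv.lTensor C f) (x ⊗ₜ[Q] (1 : Q)))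
    show x ⊗ₜ[R] s α = e (x ⊗ₜ[Q] ((1 : Q) ⊗ₜ[R] s α))
    simp [e]
  rw [key]
  exact e.bijective.comp ((LinearEquiv.lTensor C f).bijective.comp
    (TensorProduct.rid Q C).symm.bijective)

/-- Inverting the base-changed sections is the same as inverting the original sections. -/
theorem inverts_baseChange_iff (A : Type) [CommRing A] (R : Type) [CommRing R] [Algebra A R]
    (B : Type) [CommRing B] [Algebra A B]
    {ι : Type} (L : ι → Type) [∀ α, AddCommGroup (L α)] [∀ α, Module R (L α)]
    (s : ∀ α, L α)
    (C : Type) [CommRing C] [Algebra (R ⊗[A] B) C] [Algebra R C]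
    [IsScalarTower R (R ⊗[A] B) C] :
    Inverts (R ⊗[A] B) (fun α => (R ⊗[A] B) ⊗[R] L α)
      (fun α => (1 : R ⊗[A] B) ⊗ₜ[R] s α) C ↔ Inverts R L s C := by
  have key : ∀ α, (fun x : C => (x ⊗ₜ[R] s α : C ⊗[R] L α)) =
      (AlgebraTensorModule.cancelBaseChange R (R ⊗[A] B) (R ⊗[A] B) C (L α) : _ → _) ∘
        (fun x : C => (x ⊗ₜ[R ⊗[A] B] ((1 : R ⊗[A] B) ⊗ₜ[R] s α) :
          C ⊗[R ⊗[A] B] ((R ⊗[A] B) ⊗[R] L α))) := by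
    intro α
    funext x
    simp
  constructor
  · intro h α
    rw [key α]
    exact (AlgebraTensorModule.cancelBaseChange R (R ⊗[A] B) (R ⊗[A] B) C (L α)).bijective.comp
      (h α)
  · intro h α
    have := (key α) ▸ (h α)
    exact (Function.Bijective.of_comp_iff'
      (AlgebraTensorModule.cancelBaseChange R (R ⊗[A] B) (R ⊗[A] B) C (L α)).bijective _).mp this

/-- Base change of generalized fraction rings: if `Q = R_U`, then `Q ⊗_A B` is the generalized
fraction ring of `R ⊗_A B` with respect to the base-changed family `U_B`. -/
theorem stmt_11 (A : Type) [CommRing A] (R : Type) [CommRing R] [Algebra A R]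
    (B : Type) [CommRing B] [Algebra A B]
    {ι : Type} (L : ι → Type) [∀ α, AddCommGroup (L α)] [∀ α, Module R (L α)]
    (hL : ∀ α, IsInvertibleModule R (L α)) (s : ∀ α, L α)
    (Q : Type) [CommRing Q] [Algebra R Q] [Algebra A Q] [IsScalarTower A R Q]
    (hQ : IsGenFractionRing R L s Q) :
    letI : Algebra (R ⊗[A] B) (Q ⊗[A] B) :=
      (Algebra.TensorProduct.map (IsScalarTower.toAlgHom A R Q) (AlgHom.id A B)).toRingHom.toAlgebra
    IsGenFractionRing (R ⊗[A] B)
      (fun α => (R ⊗[A] B) ⊗[R] L α)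
      (fun α => (1 : R ⊗[A] B) ⊗ₜ[R] s α)
      (Q ⊗[A] B) := by
  letI instRBQB : Algebra (R ⊗[A] B) (Q ⊗[A] B) :=
    (Algebra.TensorProduct.map (IsScalarTower.toAlgHom A R Q) (AlgHom.id A B)).toRingHom.toAlgebra
  haveI tower1 : IsScalarTower R (R ⊗[A] B) (Q ⊗[A] B) :=
    IsScalarTower.of_algebraMap_eq fun r => rfl
  constructor
  · -- inverts
    exact (inverts_baseChange_iff A R B L s (Q ⊗[A] B)).mpr
      (inverts_of_algebra R L s Q (Q ⊗[A] B) hQ.inverts)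
  · -- universal
    intro C _ _ hC
    letI instRC : Algebra R C := ((algebraMap (R ⊗[A] B) C).comp
      (algebraMap R (R ⊗[A] B))).toAlgebra
    haveI towerC : IsScalarTower R (R ⊗[A] B) C := IsScalarTower.of_algebraMap_eq fun r => rfl
    have hCR : Inverts R L s C := (inverts_baseChange_iff A R B L s C).mp hC
    obtain ⟨f, -, hf⟩ := hQ.universal C hCR
    -- auxiliary algebra instances on C
    letI instAC : Algebra A C := ((algebraMap R C).comp (algebraMap A R)).toAlgebra
    haveI towerARC : IsScalarTower A R C := IsScalarTower.of_algebraMap_eq fun a => rfl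
    haveI towerARBC : IsScalarTower A (R ⊗[A] B) C := IsScalarTower.of_algebraMap_eq fun a => by
      show algebraMap R C (algebraMap A R a) = algebraMap (R ⊗[A] B) C (algebraMap A (R ⊗[A] B) a)
      rw [IsScalarTower.algebraMap_apply R (R ⊗[A] B) C,
        ← IsScalarTower.algebraMap_apply A R (R ⊗[A] B)]
    -- existence
    let g : B →ₐ[A] C := (IsScalarTower.toAlgHom A (R ⊗[A] B) C).comp
      Algebra.TensorProduct.includeRight
    let Φ₀ : Q ⊗[A] B →ₐ[A] C := Algebra.TensorProduct.productMap (f.restrictScalars A) g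
    have hcomm : ∀ x : R ⊗[A] B,
        Φ₀ (algebraMap (R ⊗[A] B) (Q ⊗[A] B) x) = algebraMap (R ⊗[A] B) C x := by
      intro x
      induction x with
      | zero => simp [map_zero]
      | tmul r b =>
          show Φ₀ ((Algebra.TensorProduct.map (IsScalarTower.toAlgHom A R Q) (AlgHom.id A B))
            (r ⊗ₜ[A] b)) = algebraMap (R ⊗[A] B) C (r ⊗ₜ[A] b)
          rw [Algebra.TensorProduct.map_tmul]
          show Φ₀ (algebraMap R Q r ⊗ₜ[A] b) = _
          rw [Algebra.TensorProduct.productMap_apply_tmul]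
          have h1 : (f.restrictScalars A) (algebraMap R Q r) = algebraMap (R ⊗[A] B) C (r ⊗ₜ[A] 1) := by
            show f (algebraMap R Q r) = _
            rw [f.commutes]
            rfl
          have h2 : g b = algebraMap (R ⊗[A] B) C ((1 : R) ⊗ₜ[A] b) := rfl
          rw [h1, h2, ← map_mul, Algebra.TensorProduct.tmul_mul_tmul, mul_one, one_mul]
      | add x y hx hy => rw [map_add, map_add, hx, hy, map_add]
    refine ⟨⟨Φ₀.toRingHom, hcomm⟩, trivial, ?_⟩
    -- uniqueness
    intro φ _
    -- it suffices to show any two R⊗B-algebra maps agree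
    have main : ∀ ψ χ : (Q ⊗[A] B) →ₐ[R ⊗[A] B] C, ψ = χ := by
      intro ψ χ
      -- restrictions to Q are R-algebra homs
      have mkres : ∀ ψ : (Q ⊗[A] B) →ₐ[R ⊗[A] B] C,
          ∃ ρ : Q →ₐ[R] C, ∀ q : Q, ρ q = ψ (q ⊗ₜ[A] 1) := by
        intro ψ
        refine ⟨⟨ψ.toRingHom.comp Algebra.TensorProduct.includeLeftRingHom, fun r => ?_⟩,
          fun q => rfl⟩
        show ψ (algebraMap R Q r ⊗ₜ[A] 1) = algebraMap R C r
        have : (algebraMap R Q r ⊗ₜ[A] (1 : B) : Q ⊗[A] B) =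
            algebraMap (R ⊗[A] B) (Q ⊗[A] B) (r ⊗ₜ[A] 1) := rfl
        rw [this, ψ.commutes]
        rfl
      obtain ⟨ρ₁, hρ₁⟩ := mkres ψ
      obtain ⟨ρ₂, hρ₂⟩ := mkres χ
      have hρ : ρ₁ = ρ₂ := (hf ρ₁ trivial).trans (hf ρ₂ trivial).symm
      apply AlgHom.coe_ringHom_injective
      apply RingHom.ext
      intro x
      induction x with
      | zero => rw [map_zero, map_zero]
      | tmul q b =>
          have hq : ψ (q ⊗ₜ[A] 1) = χ (q ⊗ₜ[A] 1) := by
            rw [← hρ₁, ← hρ₂, hρ]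
          have hb : ψ ((1 : Q) ⊗ₜ[A] b) = χ ((1 : Q) ⊗ₜ[A] b) := by
            have e1 : algebraMap (R ⊗[A] B) (Q ⊗[A] B) ((1 : R) ⊗ₜ[A] b) =
                ((1 : Q) ⊗ₜ[A] b : Q ⊗[A] B) := by
              show (Algebra.TensorProduct.map (IsScalarTower.toAlgHom A R Q) (AlgHom.id A B))
                ((1 : R) ⊗ₜ[A] b) = _
              rw [Algebra.TensorProduct.map_tmul, map_one]
              rfl
            rw [← e1, ψ.commutes, χ.commutes]
          have : (q ⊗ₜ[A] b : Q ⊗[A] B) = (q ⊗ₜ[A] 1) * ((1 : Q) ⊗ₜ[A] b) := by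
            rw [Algebra.TensorProduct.tmul_mul_tmul, mul_one, one_mul]
          rw [this, map_mul, map_mul]
          exact congrArg₂ HMul.hMul hq hb
      | add x y hx hy => rw [map_add, map_add, hx, hy]
    exact main φ ⟨Φ₀.toRingHom, hcomm⟩
end

section
/- Let N be an R-module and U a family of invertible R-modules with sections. If the localization map N → N_U = R_U ⊗_R N is an isomorphism, then for every a ∈ ℕ·A the map N → L^a ⊗_R N given by multiplication by s^a is an isomorphism. -/
open TensorProduct

open scoped TensorProduct in
/-- The tensor power `L^a = ⊗_α L_α^{⊗ a_α}` attached to a finitely supported family of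
exponents `a : ι →₀ ℕ`. -/
def Lpow (R : Type) [CommRing R] {ι : Type} (L : ι → Type)
    [∀ α, AddCommGroup (L α)] [∀ α, Module R (L α)] (a : ι →₀ ℕ) : Type :=
  ⨂[R] (p : Σ α : ι, Fin (a α)), L p.1

noncomputable instance (R : Type) [CommRing R] {ι : Type} (L : ι → Type)
    [∀ α, AddCommGroup (L α)] [∀ α, Module R (L α)] (a : ι →₀ ℕ) :
    AddCommGroup (Lpow R L a) := by unfold Lpow; infer_instance

noncomputable instance (R : Type) [CommRing R] {ι : Type} (L : ι → Type)
    [∀ α, AddCommGroup (L α)] [∀ α, Module R (L α)] (a : ι →₀ ℕ) :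
    Module R (Lpow R L a) := by unfold Lpow; infer_instance

/-- The element `s^a = ⊗_α s_α^{⊗ a_α} ∈ L^a`. -/
noncomputable def spow (R : Type) [CommRing R] {ι : Type} {L : ι → Type}
    [∀ α, AddCommGroup (L α)] [∀ α, Module R (L α)] (s : ∀ α, L α) (a : ι →₀ ℕ) :
    Lpow R L a :=
  PiTensorProduct.tprod R fun p => s p.1

/-!
Say that `m ∈ M` is invertible on `P` when `x ↦ m ⊗ x : P → M ⊗ P` is bijective. This holds for
`1 ∈ R` and is preserved by linear isomorphisms `M ≃ M'` and `P' ≃ P` and by tensor products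
`m ⊗ m'`, so it passes from the `s α` to `s^a = ⊗ s α`. Each `s α` is invertible on `Q`, because `Q`
inverts it, hence on `Q ⊗ N`; and `Q ⊗ N ≃ N` by hypothesis.
-/

namespace TensorProduct

open PiTensorProduct

variable {R : Type*} [CommSemiring R] {M M' P P' : Type*}
  [AddCommMonoid M] [Module R M] [AddCommMonoid M'] [Module R M']
  [AddCommMonoid P] [Module R P] [AddCommMonoid P'] [Module R P']

theorem bijective_mk_one : Function.Bijective (mk R R P 1) := by
  convert (TensorProduct.lid R P).symm.bijective using 1
  ext x
  simp

theorem bijective_mk_linearEquiv_apply (e : M ≃ₗ[R] M') {m : M}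
    (h : Function.Bijective (mk R M P m)) : Function.Bijective (mk R M' P (e m)) := by
  convert (e.rTensor P).bijective.comp h using 1
  ext x
  simp

theorem bijective_mk_tmul {m : M} {m' : M'} (hm : Function.Bijective (mk R M P m))
    (hm' : Function.Bijective (mk R M' P m')) :
    Function.Bijective (mk R (M ⊗[R] M') P (m ⊗ₜ m')) := by
  convert (TensorProduct.assoc R M M' P).symm.bijective.comp
    (((LinearEquiv.ofBijective _ hm').lTensor M).bijective.comp hm) using 1
  ext x
  simp

theorem bijective_mk_of_linearEquiv_right (e : P' ≃ₗ[R] P) {m : M}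
    (h : Function.Bijective (mk R M P m)) : Function.Bijective (mk R M P' m) := by
  convert (e.lTensor M).symm.bijective.comp (h.comp e.bijective) using 1
  ext x
  simp

theorem bijective_mk_rTensor {m : M} (h : Function.Bijective (mk R M P m)) :
    Function.Bijective (mk R M (P ⊗[R] P') m) := by
  have : mk R M (P ⊗[R] P') m =
      (TensorProduct.assoc R M P P').toLinearMap ∘ₗ (LinearEquiv.ofBijective _ h).rTensor P' := by
    ext x y
    simp
  rw [this]
  exact (TensorProduct.assoc R M P P').bijective.comp
    ((LinearEquiv.ofBijective _ h).rTensor P').bijective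

theorem bijective_mk_of_bijective_flip {m : M} (h : Function.Bijective ((mk R P M).flip m)) :
    Function.Bijective (mk R M P m) := by
  convert (TensorProduct.comm R P M).bijective.comp h using 1
  ext x
  simp

theorem bijective_mk_tprod_option {α : Type*} {M : Option α → Type*} [∀ k, AddCommMonoid (M k)]
    [∀ k, Module R (M k)] {m : ∀ k, M k}
    (hsome : Function.Bijective (mk R (⨂[R] a, M (some a)) P (tprod R fun a => m (some a))))
    (hnone : Function.Bijective (mk R (M none) P (m none))) :
    Function.Bijective (mk R (⨂[R] k, M k) P (tprod R m)) := by
  let e := Equiv.optionEquivSumPUnit.{0} α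
  let N : α ⊕ PUnit → Type _ := fun k => M (e.symm k)
  let f : (⨂[R] a, N (.inl a)) ⊗[R] (⨂[R] u, N (.inr u)) ≃ₗ[R] ⨂[R] k, M k :=
    tmulEquivDep R N ≪≫ₗ (reindex R M e).symm
  have hf : f (tprod R (fun a => m (some a)) ⊗ₜ tprod R (fun _ => m none)) = tprod R m := by
    rw [LinearEquiv.trans_apply, LinearEquiv.symm_apply_eq, reindex_tprod]
    refine (tmulEquivDep_apply R N (fun a => m (some a)) (fun _ => m none)).trans ?_
    congr 1
    funext k
    rcases k with a | u <;> rfl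
  have hunit := bijective_mk_linearEquiv_apply
    (subsingletonEquiv (s := fun _ : PUnit => M none) PUnit.unit).symm hnone
  rw [subsingletonEquiv_symm_apply'] at hunit
  rw [← hf]
  exact bijective_mk_linearEquiv_apply f (bijective_mk_tmul hsome hunit)

theorem bijective_mk_tprod {κ : Type*} [Finite κ] {M : κ → Type*} [∀ k, AddCommMonoid (M k)]
    [∀ k, Module R (M k)] {m : ∀ k, M k} (h : ∀ k, Function.Bijective (mk R (M k) P (m k))) :
    Function.Bijective (mk R (⨂[R] k, M k) P (tprod R m)) := by
  induction κ using Finite.induction_empty_option with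
  | of_equiv e ih =>
    have hm := bijective_mk_linearEquiv_apply (reindex R M e.symm).symm
      (ih (m := fun k => m (e k)) fun k => h (e k))
    have htprod : (reindex R M e.symm).symm (tprod R fun k => m (e k)) = tprod R m := by
      rw [LinearEquiv.symm_apply_eq, reindex_tprod]
      rfl
    rwa [htprod] at hm
  | h_empty =>
    have hm := bijective_mk_linearEquiv_apply (isEmptyEquiv (R := R) PEmpty (s := M)).symm
      (bijective_mk_one (P := P))
    have htprod : (isEmptyEquiv (R := R) PEmpty (s := M)).symm 1 = tprod R m := by
      rw [LinearEquiv.symm_apply_eq, isEmptyEquiv_apply_tprod]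
    rwa [htprod] at hm
  | h_option ih =>
    exact bijective_mk_tprod_option (ih fun k => h (some k)) (h none)

end TensorProduct

instance Finsupp.finite_sigma_fin {ι : Type*} (a : ι →₀ ℕ) : Finite (Σ i, Fin (a i)) :=
  Finite.of_surjective (fun p : Σ i : a.support, Fin (a i) => ⟨p.1.1, p.2⟩) <| by
    rintro ⟨i, k⟩
    exact ⟨⟨⟨i, Finsupp.mem_support_iff.2 k.pos.ne'⟩, k⟩, rfl⟩

theorem stmt_13_general (R : Type) [CommRing R] {ι : Type} (L : ι → Type)
    [∀ α, AddCommGroup (L α)] [∀ α, Module R (L α)] (s : ∀ α, L α)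
    (Q : Type) [CommRing Q] [Algebra R Q] (hQ : IsGenFractionRing R L s Q)
    (N : Type) [AddCommGroup N] [Module R N]
    (hN : Function.Bijective fun x : N => ((1 : Q) ⊗ₜ[R] x : Q ⊗[R] N)) :
    ∀ a : ι →₀ ℕ, Function.Bijective
      fun x : N => ((spow R s a) ⊗ₜ[R] x : Lpow R L a ⊗[R] N) := by
  intro a
  have hQN (α : ι) : Function.Bijective (mk R (L α) (Q ⊗[R] N) (s α)) :=
    bijective_mk_rTensor (bijective_mk_of_bijective_flip (hQ.inverts α))
  exact bijective_mk_of_linearEquiv_right (LinearEquiv.ofBijective (mk R Q N 1) hN)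
    (bijective_mk_tprod fun p : Σ α, Fin (a α) => hQN p.1)

/-- If the localization map `N → N_U = R_U ⊗_R N` is an isomorphism, then for every
`a ∈ ℕ·A` multiplication by `s^a` is an isomorphism `N → L^a ⊗_R N`. -/
theorem stmt_13 (R : Type) [CommRing R] {ι : Type} (L : ι → Type)
    [∀ α, AddCommGroup (L α)] [∀ α, Module R (L α)]
    (hL : ∀ α, IsInvertibleModule R (L α)) (s : ∀ α, L α)
    (Q : Type) [CommRing Q] [Algebra R Q] (hQ : IsGenFractionRing R L s Q)
    (N : Type) [AddCommGroup N] [Module R N]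
    (hN : Function.Bijective fun x : N => ((1 : Q) ⊗ₜ[R] x : Q ⊗[R] N)) :
    ∀ a : ι →₀ ℕ, Function.Bijective
      fun x : N => ((spow R s a) ⊗ₜ[R] x : Lpow R L a ⊗[R] N) :=
  stmt_13_general R L s Q hQ N hN
end

section
/- Let f : M → N be a homomorphism of R-modules with N finitely generated, and suppose the localization map N → N_U is an isomorphism. If the induced R_U-linear map f_U : M_U → N_U is surjective, then f : M → N is surjective. -/
open TensorProduct

namespace Stmt14Aux

open LinearMap

section Collapse

variable {R : Type} [CommRing R]

/-- Collapse `(X ⊗ L) ⊗ L' ≃ X` given a pairing equivalence `c : L ⊗ L' ≃ R`. -/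
noncomputable def collapse {L L' : Type} [AddCommGroup L] [Module R L]
    [AddCommGroup L'] [Module R L'] (c : L ⊗[R] L' ≃ₗ[R] R)
    (X : Type) [AddCommGroup X] [Module R X] : (X ⊗[R] L) ⊗[R] L' ≃ₗ[R] X :=
  (TensorProduct.assoc R X L L').trans
    ((TensorProduct.congr (LinearEquiv.refl R X) c).trans (TensorProduct.rid R X))

theorem collapse_tmul {L L' : Type} [AddCommGroup L] [Module R L]
    [AddCommGroup L'] [Module R L'] (c : L ⊗[R] L' ≃ₗ[R] R)
    {X : Type} [AddCommGroup X] [Module R X] (x : X) (l : L) (l' : L') :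
    collapse c X ((x ⊗ₜ l) ⊗ₜ l') = c (l ⊗ₜ l') • x := by
  simp [collapse]

theorem collapse_natural {L L' : Type} [AddCommGroup L] [Module R L]
    [AddCommGroup L'] [Module R L'] (c : L ⊗[R] L' ≃ₗ[R] R)
    {X Y : Type} [AddCommGroup X] [Module R X] [AddCommGroup Y] [Module R Y]
    (k : X →ₗ[R] Y) :
    (collapse c Y).toLinearMap ∘ₗ rTensor L' (rTensor L k)
      = k ∘ₗ (collapse c X).toLinearMap := by
  apply TensorProduct.ext_threefold
  intro x l l'
  simp [collapse_tmul]

/-- Tensoring with an invertible module preserves injectivity. -/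
theorem rTensor_injective {L : Type} [AddCommGroup L] [Module R L]
    (hL : Function.Bijective (contractRight (R := R) (M := L)))
    {V W : Type} [AddCommGroup V] [Module R V] [AddCommGroup W] [Module R W]
    {j : V →ₗ[R] W} (hj : Function.Injective j) :
    Function.Injective (rTensor L j) := by
  set Ld := Module.Dual R L with hLd
  let c : L ⊗[R] Ld ≃ₗ[R] R := LinearEquiv.ofBijective _ hL
  let c' : Ld ⊗[R] L ≃ₗ[R] R := (TensorProduct.comm R Ld L).trans c
  rw [← ker_eq_bot]
  rw [ker_eq_bot']
  intro x hx
  let u : R →ₗ[R] V ⊗[R] L := toSpanSingleton R _ x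
  have h1 : rTensor L j ∘ₗ u = 0 := by
    apply LinearMap.ext_ring
    simpa [u] using hx
  have hDinj : Function.Injective (rTensor Ld (rTensor L j)) := by
    have hnat := collapse_natural c j
    have : rTensor Ld (rTensor L j)
        = (collapse c W).symm.toLinearMap ∘ₗ (j ∘ₗ (collapse c V).toLinearMap) := by
      rw [← hnat]
      ext z
      simp
    rw [this]
    exact (collapse c W).symm.injective.comp (hj.comp (collapse c V).injective)
  have h2 : rTensor Ld u = 0 := by
    have hcomp : rTensor Ld (rTensor L j) ∘ₗ rTensor Ld u = 0 := by
      rw [← rTensor_comp, h1, rTensor_zero]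
    refine LinearMap.ext fun z => hDinj ?_
    simp only [LinearMap.zero_apply, map_zero]
    simpa using congrFun (congrArg DFunLike.coe hcomp) z
  have h3 : u ∘ₗ (collapse c' R).toLinearMap = 0 := by
    have h4 : rTensor L (rTensor Ld u) = 0 := by rw [h2, rTensor_zero]
    rw [← collapse_natural c' u, h4, comp_zero]
  have hu : u = 0 := by
    refine LinearMap.ext fun r => ?_
    have := congrFun (congrArg DFunLike.coe h3) ((collapse c' R).symm r)
    simpa using this
  have : x = u 1 := by simp [u]
  rw [this, hu]
  simp

/-- If tensoring a map with an invertible module yields a surjection, the map is surjective. -/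
theorem surjective_of_lTensor {L : Type} [AddCommGroup L] [Module R L]
    (hL : Function.Bijective (contractRight (R := R) (M := L)))
    {X N : Type} [AddCommGroup X] [Module R X] [AddCommGroup N] [Module R N]
    (h : X →ₗ[R] N) (hs : Function.Surjective (lTensor L h)) :
    Function.Surjective h := by
  set Ld := Module.Dual R L with hLd
  let c : L ⊗[R] Ld ≃ₗ[R] R := LinearEquiv.ofBijective _ hL
  set C := N ⧸ LinearMap.range h with hC
  have hzero : ∀ z : L ⊗[R] C, z = 0 := by
    have hπ : Function.Surjective (lTensor L (LinearMap.range h).mkQ) :=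
      lTensor_surjective L (Submodule.mkQ_surjective _)
    intro z
    obtain ⟨y, rfl⟩ := hπ z
    obtain ⟨w, rfl⟩ := hs y
    rw [← LinearMap.comp_apply, ← lTensor_comp, range_mkQ_comp, lTensor_zero]
    rfl
  have hzero' : ∀ z : (C ⊗[R] L) ⊗[R] Ld, z = 0 := by
    have hCL : ∀ z : C ⊗[R] L, z = 0 := by
      intro z
      have : TensorProduct.comm R C L z = 0 := hzero _
      have := congrArg (TensorProduct.comm R C L).symm this
      simpa using this
    intro z
    induction z using TensorProduct.induction_on with
    | zero => rfl
    | tmul a b => rw [hCL a]; simp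
    | add a b ha hb => rw [ha, hb]; simp
  have hCtriv : ∀ c0 : C, c0 = 0 := by
    intro c0
    have : c0 = collapse c C ((collapse c C).symm c0) := by simp
    rw [this, hzero' ((collapse c C).symm c0)]
    simp
  intro n
  have := hCtriv ((LinearMap.range h).mkQ n)
  rw [Submodule.mkQ_apply, Submodule.Quotient.mk_eq_zero] at this
  exact this

end Collapse

section Words

variable {R ι N : Type} [CommRing R] {L : ι → Type}
  [∀ α, AddCommGroup (L α)] [∀ α, Module R (L α)]
  [AddCommGroup N] [Module R N]

variable (Λ : ∀ α, (L α ⊗[R] N) ≃ₗ[R] N) (P : Submodule R N)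

/-- The submodule obtained from `P` by applying the operators encoded by the word `W`. -/
noncomputable def SW : List ι → Submodule R N
  | [] => P
  | α :: W => Submodule.map (Λ α).toLinearMap
      (LinearMap.range (lTensor (L α) (SW W).subtype))

@[simp] theorem SW_nil : SW Λ P [] = P := rfl

theorem mem_SW_cons {α : ι} {W : List ι} (l : L α) {n : N} (hn : n ∈ SW Λ P W) :
    Λ α (l ⊗ₜ n) ∈ SW Λ P (α :: W) := by
  refine ⟨l ⊗ₜ n, ⟨l ⊗ₜ (⟨n, hn⟩ : SW Λ P W), ?_⟩, rfl⟩
  simp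

theorem SW_cons_mono {α : ι} {W W' : List ι} (hWW : SW Λ P W ≤ SW Λ P W') :
    SW Λ P (α :: W) ≤ SW Λ P (α :: W') := by
  apply Submodule.map_mono
  have : (SW Λ P W).subtype = (SW Λ P W').subtype ∘ₗ Submodule.inclusion hWW := by
    rw [Submodule.subtype_comp_inclusion]
  rw [this, lTensor_comp]
  exact LinearMap.range_comp_le_range _ _

variable {s : ∀ α, L α} (hΛs : ∀ α (n : N), Λ α (s α ⊗ₜ n) = n)

include hΛs

theorem SW_le_cons {α : ι} {W : List ι} : SW Λ P W ≤ SW Λ P (α :: W) := by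
  intro n hn
  have := mem_SW_cons Λ P (s α) hn
  rwa [hΛs α n] at this

theorem SW_base_le : ∀ W : List ι, P ≤ SW Λ P W
  | [] => le_rfl
  | α :: W => le_trans (SW_base_le W) (SW_le_cons Λ P hΛs)

theorem SW_le_append_left : ∀ (U V : List ι), SW Λ P U ≤ SW Λ P (U ++ V)
  | [], V => SW_base_le Λ P hΛs V
  | α :: U, V => SW_cons_mono Λ P (SW_le_append_left U V)

theorem SW_le_append_right : ∀ (U V : List ι), SW Λ P V ≤ SW Λ P (U ++ V)
  | [], _ => le_rfl
  | α :: U, V => le_trans (SW_le_append_right U V) (SW_le_cons Λ P hΛs)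

theorem SW_append_mono {V V' : List ι} (h : SW Λ P V ≤ SW Λ P V') :
    ∀ U : List ι, SW Λ P (U ++ V) ≤ SW Λ P (U ++ V')
  | [] => h
  | α :: U => SW_cons_mono Λ P (SW_append_mono h U)

omit hΛs

/-- Peeling off one letter of a word, using invertibility of `L α`. -/
theorem SW_top_down (hL : ∀ α, Function.Bijective (contractRight (R := R) (M := L α)))
    {α : ι} {W : List ι} (htop : SW Λ P (α :: W) = ⊤) : SW Λ P W = ⊤ := by
  have hrange : LinearMap.range (lTensor (L α) (SW Λ P W).subtype) = ⊤ := by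
    rw [eq_top_iff]
    intro z _
    have hz : Λ α z ∈ SW Λ P (α :: W) := htop ▸ Submodule.mem_top
    obtain ⟨y, hy, hyz⟩ := hz
    have : y = z := (Λ α).injective hyz
    exact this ▸ hy
  have hsurj : Function.Surjective (lTensor (L α) (SW Λ P W).subtype) :=
    range_eq_top.mp hrange
  have := surjective_of_lTensor (hL α) (SW Λ P W).subtype hsurj
  rw [eq_top_iff]
  intro n _
  obtain ⟨⟨m, hm⟩, rfl⟩ := this n
  exact hm

theorem SW_top_f (hL : ∀ α, Function.Bijective (contractRight (R := R) (M := L α))) :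
    ∀ W : List ι, SW Λ P W = ⊤ → P = ⊤
  | [], h => h
  | α :: W, h => SW_top_f hL W (SW_top_down Λ P hL h)

end Words

end Stmt14Aux

open Stmt14Aux LinearMap in
/-- If `N` is finitely generated, `N → N_U` is an isomorphism, and `f_U : M_U → N_U` is
surjective, then `f : M → N` is surjective. -/
theorem stmt_14 (R : Type) [CommRing R] {ι : Type} (L : ι → Type)
    [∀ α, AddCommGroup (L α)] [∀ α, Module R (L α)]
    (hL : ∀ α, IsInvertibleModule R (L α)) (s : ∀ α, L α)
    (Q : Type) [CommRing Q] [Algebra R Q] (hQ : IsGenFractionRing R L s Q)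
    (M N : Type) [AddCommGroup M] [Module R M] [AddCommGroup N] [Module R N]
    [Module.Finite R N] (f : M →ₗ[R] N)
    (hN : Function.Bijective fun x : N => ((1 : Q) ⊗ₜ[R] x : Q ⊗[R] N))
    (hfU : Function.Surjective (LinearMap.baseChange Q f)) :
    Function.Surjective f := by
  classical
  -- the basic equivalences
  let φ : N ≃ₗ[R] Q ⊗[R] N := LinearEquiv.ofBijective (TensorProduct.mk R Q N 1) hN
  have hφ : ∀ n : N, φ n = 1 ⊗ₜ n := fun n => rfl
  let β : ∀ α, Q ≃ₗ[R] Q ⊗[R] L α := fun α =>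
    LinearEquiv.ofBijective ((TensorProduct.mk R Q (L α)).flip (s α)) (hQ.inverts α)
  have hβ : ∀ α (x : Q), β α x = x ⊗ₜ s α := fun α x => rfl
  let θ : ∀ α, L α →ₗ[R] Q := fun α =>
    (β α).symm.toLinearMap ∘ₗ TensorProduct.mk R Q (L α) 1
  have hθ : ∀ α (l : L α), θ α l = (β α).symm (1 ⊗ₜ l) := fun α l => rfl
  have hβθ : ∀ α (l : L α), (θ α l) ⊗ₜ[R] (s α) = 1 ⊗ₜ l := by
    intro α l
    have := (β α).apply_symm_apply (1 ⊗ₜ l)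
    rwa [← hθ, hβ] at this
  have hθs : ∀ α, θ α (s α) = 1 := by
    intro α
    rw [hθ]
    have : (1 : Q) ⊗ₜ[R] (s α) = β α 1 := rfl
    rw [this, (β α).symm_apply_apply]
  -- the key operators Λ α : L α ⊗ N ≃ N
  let Λ : ∀ α, (L α ⊗[R] N) ≃ₗ[R] N := fun α =>
    ((TensorProduct.congr (LinearEquiv.refl R (L α)) φ).trans
      (((TensorProduct.assoc R (L α) Q N).symm).trans
        ((TensorProduct.congr (TensorProduct.comm R (L α) Q) (LinearEquiv.refl R N)).trans
          (TensorProduct.congr (β α) (LinearEquiv.refl R N)).symm))).trans φ.symm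
  have hΛ : ∀ α (l : L α) (n : N), Λ α (l ⊗ₜ n) = φ.symm ((θ α l) ⊗ₜ n) := by
    intro α l n
    show φ.symm ((TensorProduct.congr (β α) (LinearEquiv.refl R N)).symm
      ((TensorProduct.congr (TensorProduct.comm R (L α) Q) (LinearEquiv.refl R N))
        ((TensorProduct.assoc R (L α) Q N).symm
          ((TensorProduct.congr (LinearEquiv.refl R (L α)) φ) (l ⊗ₜ n))))) = _
    rw [TensorProduct.congr_tmul]
    simp only [LinearEquiv.refl_apply, hφ]
    rw [TensorProduct.assoc_symm_tmul, TensorProduct.congr_tmul, TensorProduct.congr_symm,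
      TensorProduct.congr_tmul]
    simp only [LinearEquiv.refl_apply, TensorProduct.comm_tmul, LinearEquiv.refl_symm]
    rw [← hθ α l]
  have hΛs2 : ∀ α (n : N), Λ α (s α ⊗ₜ n) = n := by
    intro α n
    rw [hΛ, hθs]
    exact φ.symm_apply_apply n
  -- multiplicativity of the induced action of `Q` on `N`
  have hKS : ∀ (q : Q) (z : Q ⊗[R] N), q ⊗ₜ[R] (φ.symm z) = q • z := by
    intro q z
    obtain ⟨x, rfl⟩ := φ.surjective z
    rw [φ.symm_apply_apply, hφ, smul_tmul', smul_eq_mul, mul_one]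
  have hmul : ∀ (q q' : Q) (n : N),
      φ.symm ((q * q') ⊗ₜ n) = φ.symm (q ⊗ₜ φ.symm (q' ⊗ₜ n)) := by
    intro q q' n
    rw [hKS q (q' ⊗ₜ n), smul_tmul', smul_eq_mul]
  have halg : ∀ (r : R) (n : N), φ.symm (algebraMap R Q r ⊗ₜ n) = r • n := by
    intro r n
    have h1 : algebraMap R Q r ⊗ₜ[R] n = r • ((1 : Q) ⊗ₜ[R] n) := by
      rw [smul_tmul', Algebra.algebraMap_eq_smul_one]
    rw [h1, ← hφ, ← map_smul, φ.symm_apply_apply]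
  set P := LinearMap.range f with hP
  -- `Q` is generated as an `R`-algebra by the images of the `θ α`
  have hthetaQ' : ∀ α (l : L α), θ α l ∈ Algebra.adjoin R (⋃ α, Set.range (θ α)) :=
    fun α l => Algebra.subset_adjoin (Set.mem_iUnion.mpr ⟨α, Set.mem_range_self l⟩)
  have hinv : Inverts R L s (Algebra.adjoin R (⋃ α, Set.range (θ α))) := by
    intro α
    set Q' := Algebra.adjoin R (⋃ α, Set.range (θ α)) with hQ'
    have hval : Function.Injective (rTensor (L α) (Q'.val.toLinearMap)) :=
      Stmt14Aux.rTensor_injective (hL α) Subtype.val_injective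
    constructor
    · intro x y hxy
      have h2 := congrArg (rTensor (L α) (Q'.val.toLinearMap)) hxy
      simp only [rTensor_tmul] at h2
      exact Subtype.ext ((hQ.inverts α).injective h2)
    · intro y
      let θr : L α →ₗ[R] Q' := LinearMap.codRestrict (Subalgebra.toSubmodule Q') (θ α)
        (fun l => hthetaQ' α l)
      let τ : Q' ⊗[R] L α →ₗ[R] Q' := TensorProduct.lift ((LinearMap.mul R Q').compl₂ θr)
      refine ⟨τ y, ?_⟩
      have key : ∀ y : Q' ⊗[R] L α,
          ((τ y : Q') : Q) ⊗ₜ[R] s α = rTensor (L α) (Q'.val.toLinearMap) y := by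
        intro z
        induction z using TensorProduct.induction_on with
        | zero => simp
        | tmul q' l =>
          have hτ : τ (q' ⊗ₜ l) = q' * θr l := rfl
          rw [hτ, rTensor_tmul]
          have hcoe : ((q' * θr l : Q') : Q) = (q' : Q) * θ α l := rfl
          rw [hcoe]
          have h4 : ((q' : Q) * θ α l) ⊗ₜ[R] s α = (q' : Q) • ((θ α l) ⊗ₜ[R] s α) := by
            rw [smul_tmul', smul_eq_mul]
          rw [h4, hβθ α l, smul_tmul', smul_eq_mul, mul_one]
          rfl
        | add z₁ z₂ ih₁ ih₂ =>
          rw [map_add, map_add]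
          rw [← ih₁, ← ih₂]
          rw [← TensorProduct.add_tmul]
          norm_cast
      apply hval
      rw [rTensor_tmul]
      exact key y
  have hQtop : ∀ q : Q, q ∈ Algebra.adjoin R (⋃ α, Set.range (θ α)) := by
    obtain ⟨u, -, -⟩ := hQ.universal _ hinv
    obtain ⟨w, -, hw⟩ := hQ.universal Q hQ.inverts
    intro q
    have h1 : (Algebra.adjoin R (⋃ α, Set.range (θ α))).val.comp u = AlgHom.id R Q := by
      rw [hw ((Algebra.adjoin R (⋃ α, Set.range (θ α))).val.comp u) trivial,
        hw (AlgHom.id R Q) trivial]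
    have h2 : ((Algebra.adjoin R (⋃ α, Set.range (θ α))).val) (u q) = q := by
      have := congrArg (fun g : Q →ₐ[R] Q => g q) h1
      simpa using this
    rw [← h2]
    exact (u q).2
  -- every element of `Q` acts by operators supported on a finite word
  have hPred : ∀ q : Q, ∃ W : List ι, ∀ (V : List ι) (n : N),
      n ∈ SW Λ P V → φ.symm (q ⊗ₜ n) ∈ SW Λ P (W ++ V) := by
    intro q
    have hq : q ∈ Algebra.adjoin R (⋃ α, Set.range (θ α)) := hQtop q
    induction hq using Algebra.adjoin_induction with
    | mem x hx =>
      rw [Set.mem_iUnion] at hx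
      obtain ⟨α, l, rfl⟩ := hx
      refine ⟨[α], fun V n hn => ?_⟩
      rw [← hΛ]
      exact mem_SW_cons Λ P l hn
    | algebraMap r =>
      refine ⟨[], fun V n hn => ?_⟩
      rw [halg]
      exact Submodule.smul_mem _ r hn
    | add x y hx hy ihx ihy =>
      obtain ⟨W₁, h₁⟩ := ihx
      obtain ⟨W₂, h₂⟩ := ihy
      refine ⟨W₁ ++ W₂, fun V n hn => ?_⟩
      rw [TensorProduct.add_tmul, map_add, List.append_assoc]
      refine add_mem ?_ ?_
      · exact SW_append_mono Λ P hΛs2 (SW_le_append_right Λ P hΛs2 W₂ V) W₁ (h₁ V n hn)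
      · exact SW_le_append_right Λ P hΛs2 W₁ (W₂ ++ V) (h₂ V n hn)
    | mul x y hx hy ihx ihy =>
      obtain ⟨W₁, h₁⟩ := ihx
      obtain ⟨W₂, h₂⟩ := ihy
      refine ⟨W₁ ++ W₂, fun V n hn => ?_⟩
      rw [hmul, List.append_assoc]
      exact h₁ (W₂ ++ V) _ (h₂ V n hn)
  -- every element of `N` lies in some word submodule
  have hall : ∀ n : N, ∃ W : List ι, n ∈ SW Λ P W := by
    have claim : ∀ z : Q ⊗[R] M, ∃ W, φ.symm (LinearMap.baseChange Q f z) ∈ SW Λ P W := by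
      intro z
      induction z using TensorProduct.induction_on with
      | zero => exact ⟨[], by rw [map_zero, map_zero]; exact zero_mem P⟩
      | tmul q m =>
        obtain ⟨W, hW⟩ := hPred q
        refine ⟨W, ?_⟩
        rw [LinearMap.baseChange_tmul]
        have hfm : f m ∈ SW Λ P [] := ⟨m, rfl⟩
        have := hW [] (f m) hfm
        rwa [List.append_nil] at this
      | add z₁ z₂ ih₁ ih₂ =>
        obtain ⟨W₁, h₁⟩ := ih₁
        obtain ⟨W₂, h₂⟩ := ih₂
        refine ⟨W₁ ++ W₂, ?_⟩
        rw [map_add, map_add]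
        exact add_mem (SW_le_append_left Λ P hΛs2 W₁ W₂ h₁)
          (SW_le_append_right Λ P hΛs2 W₁ W₂ h₂)
    intro n
    obtain ⟨z, hz⟩ := hfU (φ n)
    obtain ⟨W, hW⟩ := claim z
    have hn : φ.symm (LinearMap.baseChange Q f z) = n := by rw [hz, φ.symm_apply_apply]
    exact ⟨W, hn ▸ hW⟩
  -- a single word works for a finite generating set
  have hcomb : ∀ G : Finset N, ∃ W : List ι, ∀ g ∈ G, g ∈ SW Λ P W := by
    intro G
    induction G using Finset.induction_on with
    | empty => exact ⟨[], by simp⟩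
    | @insert a G' ha ih =>
      obtain ⟨W', hW'⟩ := ih
      obtain ⟨Wa, hWa⟩ := hall a
      refine ⟨Wa ++ W', fun g hg => ?_⟩
      rcases Finset.mem_insert.mp hg with rfl | hg'
      · exact SW_le_append_left Λ P hΛs2 Wa W' hWa
      · exact SW_le_append_right Λ P hΛs2 Wa W' (hW' g hg')
  obtain ⟨G, hG⟩ := Module.Finite.fg_top (R := R) (M := N)
  obtain ⟨W, hW⟩ := hcomb G
  have htop : SW Λ P W = ⊤ := by
    rw [eq_top_iff, ← hG, Submodule.span_le]
    intro g hg
    exact hW g hg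
  have hPtop : P = ⊤ := Stmt14Aux.SW_top_f Λ P hL W htop
  rw [← LinearMap.range_eq_top]
  exact hPtop
end

section
/- Let I_U ⊆ R_U be an ideal of the generalized fraction ring and I = I_U ∩ R its contraction. Then the map R/I → R_U/I_U is an isomorphism if and only if R_U/I_U is finitely generated as an R-module. -/
/-!
The map `R → R_U` is a ring epimorphism: `R_U ⊗[R] R_U` is an `R_U`-algebra, so it inverts the
sections too, and the universal property forces the two inclusions `R_U → R_U ⊗[R] R_U` to agree.
Epimorphisms pass to quotients, and a finite epimorphism of commutative rings is surjective. Since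
`R/I → R_U/I_U` is injective by the choice of `I`, it is bijective exactly when
`R → R_U/I_U` is surjective, which for an epimorphism is equivalent to finiteness.
-/

open TensorProduct

lemma Inverts.of_isScalarTower {R : Type} [CommRing R] {ι : Type} {L : ι → Type}
    [∀ α, AddCommGroup (L α)] [∀ α, Module R (L α)] {s : ∀ α, L α}
    {Q : Type} [CommRing Q] [Algebra R Q] (hQ : Inverts R L s Q)
    (D : Type) [CommRing D] [Algebra R D] [Algebra Q D] [IsScalarTower R Q D] :
    Inverts R L s D := by
  intro α
  let e : Q ≃ₗ[Q] Q ⊗[R] L α := LinearEquiv.ofBijective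
    { toFun x := x ⊗ₜ[R] s α
      map_add' x y := add_tmul x y (s α)
      map_smul' q x := by simp [smul_tmul'] } (hQ α)
  let E : D ≃ₗ[Q] D ⊗[R] L α :=
    (TensorProduct.rid Q D).symm ≪≫ₗ e.lTensor D ≪≫ₗ
      AlgebraTensorModule.cancelBaseChange R Q Q D (L α)
  convert E.bijective using 1
  ext x
  simp only [E, e, LinearEquiv.trans_apply, TensorProduct.rid_symm_apply, LinearEquiv.lTensor_tmul,
    LinearEquiv.ofBijective_apply]
  exact congrArg (· ⊗ₜ[R] s α) (one_smul Q x).symm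

lemma Algebra.IsEpi.of_surjective {R A B : Type*} [CommRing R] [CommRing A] [CommRing B]
    [Algebra R A] [Algebra R B] [Algebra.IsEpi R A] (f : A →ₐ[R] B)
    (hf : Function.Surjective f) : Algebra.IsEpi R B := by
  refine (Algebra.isEpi_iff_forall_one_tmul_eq R B).mpr fun b ↦ ?_
  obtain ⟨a, rfl⟩ := hf b
  simpa using congr(Algebra.TensorProduct.map f f
    $((Algebra.isEpi_iff_forall_one_tmul_eq R A).mp ‹_› a))

lemma IsGenFractionRing.isEpi {R : Type} [CommRing R] {ι : Type} {L : ι → Type}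
    [∀ α, AddCommGroup (L α)] [∀ α, Module R (L α)] {s : ∀ α, L α}
    {Q : Type} [CommRing Q] [Algebra R Q] (hQ : IsGenFractionRing R L s Q) :
    Algebra.IsEpi R Q := by
  obtain ⟨f, -, hf⟩ := hQ.universal (Q ⊗[R] Q) (hQ.inverts.of_isScalarTower (Q ⊗[R] Q))
  have : Algebra.TensorProduct.includeRight = Algebra.TensorProduct.includeLeft (S := R) :=
    (hf _ trivial).trans (hf _ trivial).symm
  exact (Algebra.isEpi_iff_forall_one_tmul_eq R Q).mpr fun q ↦ by
    simpa using AlgHom.congr_fun this q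

theorem stmt_15_general (R : Type) [CommRing R] {ι : Type} (L : ι → Type)
    [∀ α, AddCommGroup (L α)] [∀ α, Module R (L α)]
    (s : ∀ α, L α)
    (Q : Type) [CommRing Q] [Algebra R Q] (hQ : IsGenFractionRing R L s Q)
    (IU : Ideal Q) :
    Function.Bijective (Ideal.quotientMap IU (algebraMap R Q) le_rfl) ↔
      Module.Finite R (Q ⧸ IU) := by
  have : Algebra.IsEpi R Q := hQ.isEpi
  have : Algebra.IsEpi R (Q ⧸ IU) :=
    .of_surjective (Ideal.Quotient.mkₐ R IU) Ideal.Quotient.mk_surjective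
  have hsurj : Function.Surjective (Ideal.quotientMap IU (algebraMap R Q) le_rfl) ↔
      Function.Surjective (algebraMap R (Q ⧸ IU)) :=
    (Function.Surjective.of_comp_iff _ Ideal.Quotient.mk_surjective).symm
  rw [Function.Bijective, and_iff_right Ideal.quotientMap_injective, hsurj]
  exact ⟨fun h ↦ .of_surjective (Algebra.linearMap R (Q ⧸ IU)) h,
    fun _ ↦ Algebra.isEpi_iff_surjective_algebraMap_of_finite.mp ‹_›⟩

/-- For an ideal `I_U ⊆ R_U` with contraction `I = I_U ∩ R`, the induced map
`R/I → R_U/I_U` is an isomorphism if and only if `R_U/I_U` is a finitely generated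
`R`-module. -/
theorem stmt_15 (R : Type) [CommRing R] {ι : Type} (L : ι → Type)
    [∀ α, AddCommGroup (L α)] [∀ α, Module R (L α)]
    (hL : ∀ α, IsInvertibleModule R (L α)) (s : ∀ α, L α)
    (Q : Type) [CommRing Q] [Algebra R Q] (hQ : IsGenFractionRing R L s Q)
    (IU : Ideal Q) :
    Function.Bijective (Ideal.quotientMap IU (algebraMap R Q) le_rfl) ↔
      Module.Finite R (Q ⧸ IU) :=
  stmt_15_general R L s Q hQ IU
end
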